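/- arXiv:1410.4638 — 3 statements merged into one kernel-verified Lean document; each statement's English description precedes it below -/
import Mathlib

section
/- Let $\chi \colon E^\times \to \mathbb{C}^\times$ be a group homomorphism trivial on $\mathbb{Q}_p^\times$ with conductor exponent $n > 0$. Then for every integer $k$ with $0 \le k \le n$: the value $\chi(1 + b\theta)$, for $b \in p^k\mathbb{Z}_p$ with $1+b \in \mathbb{Z}_p^\times$, depends only on the class of $b$ modulo $p^n\mathbb{Z}_p$, and the sum $\sum_b \chi(1+b\theta)^{-1}$, taken over a complete set of representatives $b$ of $p^k\mathbb{Z}_p / p^n\mathbb{Z}_p$ subject to $1+b \in \mathbb{Z}_p^\times$, equals $0$ if $k \le n-1$ and equals $1$ if $k = n$. -/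
/-
The character `v ↦ χ(v, 1)` of `ℤ_p^×` sees all of `χ` on `𝒪_E^×`: since `χ` is trivial on the
diagonal, `χ(x, y) = χ(x/y, 1)`. Hence it is trivial on `1 + p^n ℤ_p` but not on
`1 + p^{n-1} ℤ_p`, and `χ(1 + bθ) = χ(1 + b, 1)`. For `k < n` multiplying `1 + b` by some
`v ≡ 1 (mod p^{n-1})` with `χ(v, 1) ≠ 1` permutes the classes being summed over, so the sum is
fixed by a scalar `≠ 1` and vanishes; for `k = n` there is a single class, on which `χ = 1`.
-/

open scoped Classical

namespace ArakawaSplit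

variable (p : ℕ) [Fact p.Prime]

/-- The split quadratic étale algebra `E = ℚ_p × ℚ_p`, with `ℚ_p` embedded diagonally. -/
abbrev E := ℚ_[p] × ℚ_[p]

/-- `θ = (1,0) ∈ E`. -/
noncomputable def θ : E p := (1, 0)

/-- The inclusion `ℤ_p → E` (diagonal). -/
noncomputable def ι : ℤ_[p] →+* E p := algebraMap ℤ_[p] (E p)

/-- Membership in `𝒪_E = ℤ_p × ℤ_p ⊆ E`. -/
def MemOE (z : E p) : Prop := (∃ x : ℤ_[p], z.1 = x) ∧ (∃ y : ℤ_[p], z.2 = y)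

/-- Membership in `𝒪_{E,i} = ℤ_p + p^i 𝒪_E ⊆ E`. -/
def MemOEi (i : ℕ) (z : E p) : Prop :=
  ∃ a w₁ w₂ : ℤ_[p],
    z = ((a : ℚ_[p]) + (p : ℚ_[p]) ^ i * w₁, (a : ℚ_[p]) + (p : ℚ_[p]) ^ i * w₂)

/-- Membership of a unit `u ∈ Eˣ` in `𝒪_{E,i}^× = 𝒪_{E,i} ∩ 𝒪_E^×`. -/
def MemOEiUnits (i : ℕ) (u : (E p)ˣ) : Prop :=
  MemOEi p i ↑u ∧ MemOE p ↑u ∧ MemOE p ↑u⁻¹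

/-- `χ : E^× → ℂ^×` is trivial on the diagonally embedded `ℚ_p^×`. -/
def TrivialOnQp (χ : (E p)ˣ →* ℂˣ) : Prop :=
  ∀ t : ℚ_[p]ˣ, χ (Units.map (algebraMap ℚ_[p] (E p)).toMonoidHom t) = 1

/-- `χ` has conductor exponent `n`: it is trivial on `𝒪_{E,n}^×` and, when `n > 0`,
nontrivial on `𝒪_{E,n-1}^×`. -/
def CondExp (χ : (E p)ˣ →* ℂˣ) (n : ℕ) : Prop :=
  (∀ u : (E p)ˣ, MemOEiUnits p n u → χ u = 1) ∧
  (0 < n → ∃ u : (E p)ˣ, MemOEiUnits p (n - 1) u ∧ χ u ≠ 1)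

/-- The value of `χ` at an element of `E`, with junk value `0` at non-units. -/
noncomputable def chiV (χ : (E p)ˣ →* ℂˣ) (z : E p) : ℂ :=
  if h : IsUnit z then (χ h.unit : ℂ) else 0

end ArakawaSplit

open ArakawaSplit

section ResidueSystem

variable {R : Type*} [CommRing R]

def IsResidueSystem (d : R) (S : Set R) (T : Finset R) : Prop :=
  (∀ b ∈ T, b ∈ S) ∧ ∀ x ∈ S, ∃! b, b ∈ T ∧ d ∣ x - b

variable {d : R} {S : Set R} {T : Finset R}

theorem IsResidueSystem.eq_of_dvd_sub (hT : IsResidueSystem d S T) {b b' : R} (hb : b ∈ T)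
    (hb' : b' ∈ T) (h : d ∣ b - b') : b = b' :=
  (hT.2 b (hT.1 b hb)).unique ⟨hb, by simp⟩ ⟨hb', h⟩

/-- An injective self-map of the finite set `S / d` is a bijection. -/
theorem IsResidueSystem.sum_comp_eq {M : Type*} [AddCommMonoid M] (hT : IsResidueSystem d S T)
    {f : R → M} (hf : ∀ x ∈ S, ∀ y ∈ S, d ∣ x - y → f x = f y) {τ : R → R}
    (hτ : Set.MapsTo τ S S) (hτd : ∀ x ∈ S, ∀ y ∈ S, d ∣ τ x - τ y → d ∣ x - y) :
    ∑ b ∈ T, f (τ b) = ∑ b ∈ T, f b := by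
  choose! r hrT hrd using fun x hx => (hT.2 x hx).exists
  have hinj : Set.InjOn (fun b => r (τ b)) T := by
    intro b hb b' hb' h
    have hrb := hrd _ (hτ (hT.1 b hb))
    have hrb' := hrd _ (hτ (hT.1 b' hb'))
    rw [show r (τ b) = r (τ b') from h] at hrb
    refine hT.eq_of_dvd_sub hb hb' (hτd _ (hT.1 b hb) _ (hT.1 b' hb') ?_)
    simpa using dvd_sub hrb hrb'
  have himage : T.image (fun b => r (τ b)) = T :=
    Finset.eq_of_subset_of_card_le
      (Finset.image_subset_iff.mpr fun b hb => hrT _ (hτ (hT.1 b hb)))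
      (Finset.card_image_of_injOn hinj).ge
  calc ∑ b ∈ T, f (τ b) = ∑ b ∈ T, f (r (τ b)) := Finset.sum_congr rfl fun b hb =>
        hf _ (hτ (hT.1 b hb)) _ (hT.1 _ (hrT _ (hτ (hT.1 b hb)))) (hrd _ (hτ (hT.1 b hb)))
    _ = ∑ b ∈ T, f b := by rw [← Finset.sum_image hinj, himage]

theorem IsResidueSystem.card_eq_one (hT : IsResidueSystem d S T) (hS : S.Nonempty)
    (hdS : ∀ x ∈ S, ∀ y ∈ S, d ∣ x - y) : T.card = 1 := by
  obtain ⟨x, hx⟩ := hS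
  obtain ⟨b, ⟨hb, -⟩, -⟩ := hT.2 x hx
  exact Finset.card_eq_one.mpr ⟨b, Finset.eq_singleton_iff_unique_mem.mpr
    ⟨hb, fun b' hb' => hT.eq_of_dvd_sub hb' hb (hdS _ (hT.1 b' hb') _ (hT.1 b hb))⟩⟩

theorem mapsTo_mul_one_add_sub_one {v : R} (hv : IsUnit v) (hvd : d ∣ v - 1) :
    Set.MapsTo (fun x => v * (1 + x) - 1) {x | d ∣ x ∧ IsUnit (1 + x)}
      {x | d ∣ x ∧ IsUnit (1 + x)} := by
  rintro x ⟨hdx, hx⟩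
  refine ⟨?_, by simpa using hv.mul hx⟩
  show d ∣ v * (1 + x) - 1
  rw [show v * (1 + x) - 1 = (v - 1) + v * x by ring]
  exact dvd_add hvd (hdx.mul_left v)

end ResidueSystem

namespace ArakawaSplit

variable {p : ℕ} [Fact p.Prime] {χ : (E p)ˣ →* ℂˣ}

variable (p) in
noncomputable def embFst : ℤ_[p] →* E p :=
  (MonoidHom.inl ℚ_[p] ℚ_[p]).comp (algebraMap ℤ_[p] ℚ_[p]).toMonoidHom

@[simp]
theorem embFst_apply (x : ℤ_[p]) : embFst p x = ((x : ℚ_[p]), 1) := rfl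

theorem one_add_ι_mul_θ (b : ℤ_[p]) : 1 + ι p b * θ p = embFst p (1 + b) := by
  ext <;> simp [ι, θ, Prod.algebraMap_apply]

theorem chiV_units (u : (E p)ˣ) : chiV p χ u = χ u := by
  rw [chiV, dif_pos u.isUnit, u.isUnit.unit_of_val_units]

theorem chiV_of_not_isUnit {z : E p} (hz : ¬IsUnit z) : chiV p χ z = 0 := by
  rw [chiV, dif_neg hz]

theorem chiV_mul (z w : E p) : chiV p χ (z * w) = chiV p χ z * chiV p χ w := by
  by_cases hz : IsUnit z
  · by_cases hw : IsUnit w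
    · lift z to (E p)ˣ using hz
      lift w to (E p)ˣ using hw
      rw [← Units.val_mul, chiV_units, chiV_units, chiV_units, map_mul, Units.val_mul]
    · rw [chiV_of_not_isUnit hw, chiV_of_not_isUnit (by simpa [hz] using hw), mul_zero]
  · rw [chiV_of_not_isUnit hz, chiV_of_not_isUnit (fun h => hz (isUnit_of_mul_isUnit_left h)),
      zero_mul]

theorem TrivialOnQp.chiV_algebraMap (hχQ : TrivialOnQp p χ) {t : ℚ_[p]} (ht : t ≠ 0) :
    chiV p χ (algebraMap ℚ_[p] (E p) t) = 1 := by
  have := hχQ (Units.mk0 t ht)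
  rw [← Units.val_eq_one, ← chiV_units] at this
  exact this

theorem memOEiUnits_map_embFst {i : ℕ} (v : ℤ_[p]ˣ) (hv : (p : ℤ_[p]) ^ i ∣ (v : ℤ_[p]) - 1) :
    MemOEiUnits p i (Units.map (embFst p) v) := by
  obtain ⟨w, hw⟩ := hv
  have hv : (v : ℤ_[p]) = 1 + (p : ℤ_[p]) ^ i * w := by linear_combination hw
  refine ⟨⟨1, w, 0, ?_⟩, ⟨⟨v, rfl⟩, ⟨1, by simp⟩⟩, ⟨⟨↑v⁻¹, ?_⟩, ⟨1, ?_⟩⟩⟩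
  · ext <;> simp [hv]
  all_goals rw [← map_inv]; rfl

theorem CondExp.chiV_embFst_eq_one {n : ℕ} (hχn : CondExp p χ n) {x : ℤ_[p]} (hx : IsUnit x)
    (h : (p : ℤ_[p]) ^ n ∣ x - 1) : chiV p χ (embFst p x) = 1 := by
  lift x to ℤ_[p]ˣ using hx
  rw [← Units.coe_map, chiV_units, hχn.1 _ (memOEiUnits_map_embFst x h), Units.val_one]

theorem CondExp.chiV_embFst_congr {n : ℕ} (hχn : CondExp p χ n) {x y : ℤ_[p]} (hx : IsUnit x)
    (hy : IsUnit y) (h : (p : ℤ_[p]) ^ n ∣ x - y) :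
    chiV p χ (embFst p x) = chiV p χ (embFst p y) := by
  lift y to ℤ_[p]ˣ using hy
  have hxy : x = y * (↑y⁻¹ * x) := by simp
  have hd : (p : ℤ_[p]) ^ n ∣ ↑y⁻¹ * x - 1 := by
    rw [show ↑y⁻¹ * x - 1 = ↑y⁻¹ * (x - y) by simp [mul_sub]]
    exact Units.dvd_mul_left.mpr h
  rw [hxy, map_mul, chiV_mul, hχn.chiV_embFst_eq_one ((y⁻¹).isUnit.mul hx) hd, mul_one]

theorem MemOEiUnits.exists_units {i : ℕ} {u : (E p)ˣ} (hu : MemOEiUnits p i u) :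
    ∃ x y : ℤ_[p]ˣ, (u : E p) = (((x : ℤ_[p]) : ℚ_[p]), ((y : ℤ_[p]) : ℚ_[p])) ∧
      (p : ℤ_[p]) ^ i ∣ (x : ℤ_[p]) - y := by
  obtain ⟨⟨a, w₁, w₂, hu⟩, ⟨⟨x, hx⟩, ⟨y, hy⟩⟩, ⟨⟨x', hx'⟩, ⟨y', hy'⟩⟩⟩ := hu
  have hinv := u.mul_inv
  have hxu : IsUnit x := IsUnit.of_mul_eq_one x' <| Subtype.ext <| by
    push_cast; rw [← hx, ← hx']; exact congrArg Prod.fst hinv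
  have hyu : IsUnit y := IsUnit.of_mul_eq_one y' <| Subtype.ext <| by
    push_cast; rw [← hy, ← hy']; exact congrArg Prod.snd hinv
  have hxa : x = a + (p : ℤ_[p]) ^ i * w₁ := by
    apply Subtype.ext; push_cast; rw [← hx, hu]
  have hya : y = a + (p : ℤ_[p]) ^ i * w₂ := by
    apply Subtype.ext; push_cast; rw [← hy, hu]
  refine ⟨hxu.unit, hyu.unit, Prod.ext hx hy, w₁ - w₂, ?_⟩
  rw [IsUnit.unit_spec, IsUnit.unit_spec, hxa, hya]
  ring

theorem CondExp.exists_chiV_embFst_ne_one (hχQ : TrivialOnQp p χ) {n : ℕ} (hχn : CondExp p χ n)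
    (hn : 0 < n) :
    ∃ v : ℤ_[p]ˣ, (p : ℤ_[p]) ^ (n - 1) ∣ (v : ℤ_[p]) - 1 ∧ chiV p χ (embFst p v) ≠ 1 := by
  obtain ⟨u, hu, hχu⟩ := hχn.2 hn
  obtain ⟨x, y, hxy, hd⟩ := hu.exists_units
  refine ⟨y⁻¹ * x, ?_, fun h => hχu (Units.val_eq_one.mp ?_)⟩
  · rw [Units.val_mul, show (↑y⁻¹ * x : ℤ_[p]) - 1 = ↑y⁻¹ * (x - y) by simp [mul_sub]]
    exact Units.dvd_mul_left.mpr hd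
  · have hsplit : (u : E p) = algebraMap ℚ_[p] (E p) (y : ℤ_[p]) * embFst p ↑(y⁻¹ * x) := by
      ext
      · simp [hxy, Prod.algebraMap_apply, ← mul_assoc, ← PadicInt.coe_mul]
      · simp [hxy, Prod.algebraMap_apply, ← PadicInt.coe_mul]
    rw [← chiV_units, hsplit, chiV_mul, hχQ.chiV_algebraMap (by simp), h, one_mul]

theorem CondExp.sum_inv_chiV_embFst_eq_zero (hχQ : TrivialOnQp p χ) {n : ℕ}
    (hχn : CondExp p χ n) {k : ℕ} (hkn : k < n) {T : Finset ℤ_[p]}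
    (hT : IsResidueSystem ((p : ℤ_[p]) ^ n) {x | (p : ℤ_[p]) ^ k ∣ x ∧ IsUnit (1 + x)} T) :
    ∑ b ∈ T, (chiV p χ (embFst p (1 + b)))⁻¹ = 0 := by
  obtain ⟨v, hvd, hv⟩ := hχn.exists_chiV_embFst_ne_one hχQ (by omega)
  set f := fun b : ℤ_[p] => (chiV p χ (embFst p (1 + b)))⁻¹
  have hshift : ∑ b ∈ T, f (v * (1 + b) - 1) = ∑ b ∈ T, f b :=
    hT.sum_comp_eq
      (fun x hx y hy h => by
        simp only [f]; rw [hχn.chiV_embFst_congr hx.2 hy.2 (by simpa using h)])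
      (mapsTo_mul_one_add_sub_one v.isUnit ((pow_dvd_pow _ (by omega)).trans hvd))
      (fun x _ y _ h => by
        rwa [show v * (1 + x) - 1 - (v * (1 + y) - 1) = v * (x - y) by ring,
          Units.dvd_mul_left] at h)
  have hscale : ∑ b ∈ T, f (v * (1 + b) - 1) = (chiV p χ (embFst p v))⁻¹ * ∑ b ∈ T, f b := by
    rw [Finset.mul_sum]
    refine Finset.sum_congr rfl fun b _ => ?_
    simp only [f, add_sub_cancel, map_mul, chiV_mul, mul_inv]
  rw [hshift] at hscale
  by_contra hne
  exact hv (inv_eq_one.mp ((mul_eq_right₀ hne).mp hscale.symm))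

theorem CondExp.sum_inv_chiV_embFst_eq_one {n : ℕ} (hχn : CondExp p χ n) {T : Finset ℤ_[p]}
    (hT : IsResidueSystem ((p : ℤ_[p]) ^ n) {x | (p : ℤ_[p]) ^ n ∣ x ∧ IsUnit (1 + x)} T) :
    ∑ b ∈ T, (chiV p χ (embFst p (1 + b)))⁻¹ = 1 := by
  have hone : ∀ b ∈ T, (chiV p χ (embFst p (1 + b)))⁻¹ = 1 := fun b hb => by
    rw [hχn.chiV_embFst_eq_one (hT.1 b hb).2 (by simpa using (hT.1 b hb).1), inv_one]
  rw [Finset.sum_congr rfl hone, Finset.sum_const,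
    hT.card_eq_one ⟨0, by simp⟩ fun x hx y hy => dvd_sub hx.1 hy.1, one_smul]

end ArakawaSplit

theorem lemma_3_4_1_general (p : ℕ) [Fact p.Prime] (χ : (E p)ˣ →* ℂˣ)
    (hχQ : TrivialOnQp p χ) (n : ℕ) (hχn : CondExp p χ n)
    (k : ℕ) :
    (∀ b b' : ℤ_[p],
        (p : ℤ_[p]) ^ k ∣ b → IsUnit (1 + b) →
        (p : ℤ_[p]) ^ k ∣ b' → IsUnit (1 + b') →
        (p : ℤ_[p]) ^ n ∣ (b - b') →
        chiV p χ (1 + ι p b * θ p) = chiV p χ (1 + ι p b' * θ p)) ∧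
    (∀ T : Finset ℤ_[p],
        (∀ b ∈ T, (p : ℤ_[p]) ^ k ∣ b ∧ IsUnit (1 + b)) →
        (∀ x : ℤ_[p], (p : ℤ_[p]) ^ k ∣ x → IsUnit (1 + x) →
          ∃! b, b ∈ T ∧ (p : ℤ_[p]) ^ n ∣ (x - b)) →
        (k < n → ∑ b ∈ T, (chiV p χ (1 + ι p b * θ p))⁻¹ = 0) ∧
        (k = n → ∑ b ∈ T, (chiV p χ (1 + ι p b * θ p))⁻¹ = 1)) := by
  simp only [one_add_ι_mul_θ]
  refine ⟨fun b b' _ hb _ hb' h => hχn.chiV_embFst_congr hb hb' (by simpa using h),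
    fun T hT hrep => ?_⟩
  have hTres : IsResidueSystem ((p : ℤ_[p]) ^ n) {x | (p : ℤ_[p]) ^ k ∣ x ∧ IsUnit (1 + x)} T :=
    ⟨hT, fun x hx => hrep x hx.1 hx.2⟩
  refine ⟨fun hkn => hχn.sum_inv_chiV_embFst_eq_zero hχQ hkn hTres, ?_⟩
  rintro rfl
  exact hχn.sum_inv_chiV_embFst_eq_one hTres

/-- **Lemma 3.4(1)** (split prime case). Let `χ : E^× → ℂ^×` be trivial on `ℚ_p^×`
with conductor exponent `n > 0`, and let `0 ≤ k ≤ n`. Then the value `χ(1+bθ)`, for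
`b ∈ p^k ℤ_p` with `1+b ∈ ℤ_p^×`, depends only on `b mod p^n ℤ_p`, and the sum
`∑_b χ(1+bθ)⁻¹` over a complete set of representatives `b` of `p^k ℤ_p / p^n ℤ_p`
subject to `1+b ∈ ℤ_p^×` equals `0` if `k ≤ n-1` and `1` if `k = n`. -/
theorem lemma_3_4_1 (p : ℕ) [Fact p.Prime] (χ : (E p)ˣ →* ℂˣ)
    (hχQ : TrivialOnQp p χ) (n : ℕ) (hn : 0 < n) (hχn : CondExp p χ n)
    (k : ℕ) (hk : k ≤ n) :
    (∀ b b' : ℤ_[p],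
        (p : ℤ_[p]) ^ k ∣ b → IsUnit (1 + b) →
        (p : ℤ_[p]) ^ k ∣ b' → IsUnit (1 + b') →
        (p : ℤ_[p]) ^ n ∣ (b - b') →
        chiV p χ (1 + ι p b * θ p) = chiV p χ (1 + ι p b' * θ p)) ∧
    (∀ T : Finset ℤ_[p],
        (∀ b ∈ T, (p : ℤ_[p]) ^ k ∣ b ∧ IsUnit (1 + b)) →
        (∀ x : ℤ_[p], (p : ℤ_[p]) ^ k ∣ x → IsUnit (1 + x) →
          ∃! b, b ∈ T ∧ (p : ℤ_[p]) ^ n ∣ (x - b)) →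
        (k < n → ∑ b ∈ T, (chiV p χ (1 + ι p b * θ p))⁻¹ = 0) ∧
        (k = n → ∑ b ∈ T, (chiV p χ (1 + ι p b * θ p))⁻¹ = 1)) :=
  lemma_3_4_1_general p χ hχQ n hχn k
end

section
/- Let $\chi \colon E^\times \to \mathbb{C}^\times$ be a group homomorphism trivial on $\mathbb{Q}_p^\times$ with conductor exponent $n > 0$. Then (both sums being well defined, the summands depending only on the indicated residue classes) $\sum_{b} \chi(1+b\theta)^{-1} = -\sum_{a} \chi(a+\theta)^{-1}$, where $b$ runs over a complete set of representatives of $\mathbb{Z}_p/p^n\mathbb{Z}_p$ and $a$ runs over a complete set of representatives of $p\mathbb{Z}_p/p^n\mathbb{Z}_p$; moreover this common value equals $-\chi(\theta)^{-1}$ if $n = 1$ and equals $0$ if $n > 1$. -/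
open scoped Classical

namespace ArakawaQuad

variable (p : ℕ) [Fact p.Prime]
variable (E : Type*) [Field E] [Algebra ℚ_[p] E] [Algebra ℤ_[p] E]
  [IsScalarTower ℤ_[p] ℚ_[p] E]

/-- Membership in `𝒪_{E,i} = ℤ_p + p^i 𝒪_E`, where `𝒪_E` is the ring of integers
(the integral closure of `ℤ_p` in `E`). -/
def MemOEi (i : ℕ) (z : E) : Prop :=
  ∃ a : ℤ_[p], ∃ w ∈ integralClosure ℤ_[p] E, z = algebraMap ℤ_[p] E a + (p : E) ^ i * w

/-- Membership of a unit `u ∈ Eˣ` in `𝒪_{E,i}^× = 𝒪_{E,i} ∩ 𝒪_E^×`. -/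
def MemOEiUnits (i : ℕ) (u : Eˣ) : Prop :=
  MemOEi p E i ↑u ∧ (↑u : E) ∈ integralClosure ℤ_[p] E ∧
    ((↑u⁻¹ : E) ∈ integralClosure ℤ_[p] E)

/-- `χ : E^× → ℂ^×` is trivial on `ℚ_p^×`. -/
def TrivialOnQp (χ : Eˣ →* ℂˣ) : Prop :=
  ∀ t : ℚ_[p]ˣ, χ (Units.map (algebraMap ℚ_[p] E).toMonoidHom t) = 1

/-- `χ` has conductor exponent `n`: it is trivial on `𝒪_{E,n}^×` and, when `n > 0`,
nontrivial on `𝒪_{E,n-1}^×`. -/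
def CondExp (χ : Eˣ →* ℂˣ) (n : ℕ) : Prop :=
  (∀ u : Eˣ, MemOEiUnits p E n u → χ u = 1) ∧
  (0 < n → ∃ u : Eˣ, MemOEiUnits p E (n - 1) u ∧ χ u ≠ 1)

/-- The value of `χ : E^× → ℂ^×` at an element of `E`, with junk value `0` at `0`. -/
noncomputable def chiV {F : Type*} [Field F] (χ : Fˣ →* ℂˣ) (z : F) : ℂ :=
  if h : z ≠ 0 then (χ (Units.mk0 z h) : ℂ) else 0

/-- `E` is an unramified quadratic extension of `ℚ_p`: it has degree `2` and the
maximal ideal of its ring of integers `𝒪_E` is `p 𝒪_E` (an element of `𝒪_E` is a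
unit of `𝒪_E` if and only if it does not lie in `p 𝒪_E`). -/
def Unramified : Prop :=
  Module.finrank ℚ_[p] E = 2 ∧
  ∀ z ∈ integralClosure ℤ_[p] E,
    ((∃ w ∈ integralClosure ℤ_[p] E, z * w = 1) ↔
      ¬ ∃ w ∈ integralClosure ℤ_[p] E, z = (p : E) * w)

/-- `E` is a ramified quadratic extension of `ℚ_p` with maximal ideal `𝔭 = θ 𝒪_E`
satisfying `𝔭² = p 𝒪_E`: it has degree `2`, `θ ∈ 𝒪_E` generates the maximal ideal
(an element of `𝒪_E` is a unit of `𝒪_E` iff it is not in `θ 𝒪_E`), and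
`θ² = p u` for a unit `u` of `𝒪_E`. -/
def Ramified (θ : E) : Prop :=
  Module.finrank ℚ_[p] E = 2 ∧
  θ ∈ integralClosure ℤ_[p] E ∧
  (∀ z ∈ integralClosure ℤ_[p] E,
    ((∃ w ∈ integralClosure ℤ_[p] E, z * w = 1) ↔
      ¬ ∃ w ∈ integralClosure ℤ_[p] E, z = θ * w)) ∧
  (∃ u ∈ integralClosure ℤ_[p] E,
    (∃ v ∈ integralClosure ℤ_[p] E, u * v = 1) ∧ θ ^ 2 = (p : E) * u)

/-- `{1, θ}` is a `ℤ_p`-basis of the ring of integers `𝒪_E`. -/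
def IsIntBasis (θ : E) : Prop :=
  θ ∈ integralClosure ℤ_[p] E ∧
  ∀ z ∈ integralClosure ℤ_[p] E, ∃! ab : ℤ_[p] × ℤ_[p],
    z = algebraMap ℤ_[p] E ab.1 + algebraMap ℤ_[p] E ab.2 * θ

/-- `x` lies in the double coset `ℚ_p^× y 𝒪_{E,i}^×` inside `E^×`. -/
def InCoset (i : ℕ) (y x : E) : Prop :=
  ∃ t : ℚ_[p]ˣ, ∃ u : Eˣ, MemOEiUnits p E i u ∧
    x = algebraMap ℚ_[p] E ↑t * y * ↑u

/-- The unit group `𝒪_E^×`, as a subgroup of `E^×`. -/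
def OEUnits : Subgroup Eˣ where
  carrier := {u | (↑u : E) ∈ integralClosure ℤ_[p] E ∧
    ((↑u⁻¹ : E) ∈ integralClosure ℤ_[p] E)}
  one_mem' := ⟨by simpa using (integralClosure ℤ_[p] E).one_mem,
    by simpa using (integralClosure ℤ_[p] E).one_mem⟩
  mul_mem' := by
    rintro a b ⟨ha1, ha2⟩ ⟨hb1, hb2⟩
    refine ⟨?_, ?_⟩
    · simpa [Units.val_mul] using mul_mem ha1 hb1
    · simpa [Units.val_mul, mul_inv_rev] using mul_mem hb2 ha2
  inv_mem' := by
    rintro a ⟨h1, h2⟩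
    exact ⟨h2, by simpa using h1⟩

end ArakawaQuad

open ArakawaQuad

/-!
Units of `𝒪_E` are the `x + yθ` with `x` or `y` in `ℤ_p^×` (as `p` is prime in `𝒪_E`), so
`𝒪_E^× / ℤ_p^×` is `ℙ¹(ℤ_p)` and `𝒪_E^× / ℤ_p^× 𝒪_{E,n}^×` is `ℙ¹(ℤ/p^n)`, represented by the
`1 + bθ` (`b ∈ T`) and the `a + θ` (`a ∈ A`). On this finite set `χ` is well defined, and
multiplication by a unit `u ∈ 𝒪_{E,n-1}^×` with `χ(u) ≠ 1` permutes it while scaling `χ⁻¹` by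
`χ(u)⁻¹ ≠ 1`; hence the sum of `χ⁻¹` over all representatives vanishes. For `n > 1` such a `u`
lies in `ℤ_p^×(1 + p𝒪_E)`, so it also preserves the chart `{1 + bθ}` and that partial sum
vanishes too. For `n = 1`, `A = {a₀}` with `a₀ ≡ 0`, which leaves `-χ(θ)⁻¹`.
-/

theorem Finset.sum_eq_zero_of_comp_eq_mul {ι R : Type*} [CommRing R] [IsDomain R]
    {s : Finset ι} {f : ι → R} {τ : ι → ι} (hτ : Set.MapsTo τ s s) (hτinj : Set.InjOn τ s)
    {c : R} (hc : c ≠ 1) (hf : ∀ i ∈ s, f (τ i) = c * f i) : ∑ i ∈ s, f i = 0 := by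
  have hperm : ∑ i ∈ s, f (τ i) = ∑ i ∈ s, f i :=
    Finset.sum_nbij τ hτ hτinj (Finset.surjOn_of_injOn_of_card_le τ hτ hτinj le_rfl)
      fun _ _ => rfl
  rw [Finset.sum_congr rfl hf, ← Finset.mul_sum] at hperm
  have : (c - 1) * ∑ i ∈ s, f i = 0 := by rw [sub_mul, hperm, one_mul, sub_self]
  exact (mul_eq_zero.1 this).resolve_left (sub_ne_zero.2 hc)

theorem dvd_sub_of_dvd_one_sub {R : Type*} [CommRing R] {P e b b' : R} (he : P ∣ 1 - e)
    (hb : P ∣ b - e * b') : P ∣ b - b' := by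
  have : b - b' = (b - e * b') - (1 - e) * b' := by ring
  rw [this]
  exact dvd_sub hb (he.mul_right b')

theorem PadicInt.not_isUnit_iff_dvd {p : ℕ} [Fact p.Prime] {x : ℤ_[p]} :
    ¬ IsUnit x ↔ (p : ℤ_[p]) ∣ x := by
  rw [PadicInt.not_isUnit_iff, PadicInt.norm_lt_one_iff_dvd]

namespace ArakawaQuad

theorem chiV_mul {F : Type*} [Field F] (χ : Fˣ →* ℂˣ) {z w : F} (hz : z ≠ 0)
    (hw : w ≠ 0) : chiV χ (z * w) = chiV χ z * chiV χ w := by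
  rw [chiV, chiV, chiV, dif_pos hz, dif_pos hw, dif_pos (mul_ne_zero hz hw), ← Units.val_mul,
    ← map_mul]
  exact congrArg _ (congrArg χ (Units.ext rfl))

theorem chiV_coe {F : Type*} [Field F] (χ : Fˣ →* ℂˣ) (u : Fˣ) :
    chiV χ (u : F) = χ u := by
  rw [chiV, dif_pos u.ne_zero, Units.mk0_val]

section IntegralBasis

variable {p : ℕ} [Fact p.Prime] {E : Type*} [Field E] [Algebra ℤ_[p] E] {θ : E}

local notation "𝒪" => integralClosure ℤ_[p] E

theorem IsIntBasis.mem (hθ : IsIntBasis p E θ) (x y : ℤ_[p]) :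
    algebraMap ℤ_[p] E x + algebraMap ℤ_[p] E y * θ ∈ 𝒪 :=
  add_mem (Subalgebra.algebraMap_mem _ x) (mul_mem (Subalgebra.algebraMap_mem _ y) hθ.1)

theorem IsIntBasis.exists_eq (hθ : IsIntBasis p E θ) {z : E} (hz : z ∈ 𝒪) :
    ∃ x y : ℤ_[p], z = algebraMap ℤ_[p] E x + algebraMap ℤ_[p] E y * θ := by
  obtain ⟨⟨x, y⟩, h, -⟩ := hθ.2 z hz
  exact ⟨x, y, h⟩

theorem IsIntBasis.eq_of_eq (hθ : IsIntBasis p E θ) {x y x' y' : ℤ_[p]}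
    (h : algebraMap ℤ_[p] E x + algebraMap ℤ_[p] E y * θ
      = algebraMap ℤ_[p] E x' + algebraMap ℤ_[p] E y' * θ) :
    x = x' ∧ y = y' :=
  Prod.ext_iff.1 ((hθ.2 _ (hθ.mem x y)).unique (y₁ := (x, y)) (y₂ := (x', y')) rfl h)

theorem IsIntBasis.exists_eq_p_mul_iff (hθ : IsIntBasis p E θ) (x y : ℤ_[p]) :
    (∃ w ∈ 𝒪, algebraMap ℤ_[p] E x + algebraMap ℤ_[p] E y * θ = (p : E) * w) ↔
      (p : ℤ_[p]) ∣ x ∧ (p : ℤ_[p]) ∣ y := by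
  constructor
  · rintro ⟨w, hw, h⟩
    obtain ⟨s, t, rfl⟩ := hθ.exists_eq hw
    obtain ⟨hx, hy⟩ := hθ.eq_of_eq (x' := p * s) (y' := p * t) (by
      rw [h]; simp only [map_mul, map_natCast]; ring)
    exact ⟨⟨s, hx⟩, ⟨t, hy⟩⟩
  · rintro ⟨⟨s, rfl⟩, ⟨t, rfl⟩⟩
    exact ⟨_, hθ.mem s t, by simp only [map_mul, map_natCast]; ring⟩

variable (p) in
def IsIntUnit (z : E) : Prop :=
  z ≠ 0 ∧ z ∈ 𝒪 ∧ z⁻¹ ∈ 𝒪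

theorem IsIntUnit.inv {z : E} (hz : IsIntUnit p z) : IsIntUnit p z⁻¹ :=
  ⟨inv_ne_zero hz.1, hz.2.2, by rw [inv_inv]; exact hz.2.1⟩

theorem IsIntUnit.mul {z w : E} (hz : IsIntUnit p z) (hw : IsIntUnit p w) :
    IsIntUnit p (z * w) :=
  ⟨mul_ne_zero hz.1 hw.1, mul_mem hz.2.1 hw.2.1, by rw [mul_inv]; exact mul_mem hz.2.2 hw.2.2⟩

theorem isIntUnit_algebraMap (e : ℤ_[p]ˣ) : IsIntUnit p (algebraMap ℤ_[p] E e) := by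
  refine ⟨(e.isUnit.map _).ne_zero, Subalgebra.algebraMap_mem _ _, ?_⟩
  rw [← map_units_inv]
  exact Subalgebra.algebraMap_mem _ _

theorem isIntUnit_of_memOEiUnits {m : ℕ} {u : Eˣ} (hu : MemOEiUnits p E m u) :
    IsIntUnit p (u : E) :=
  ⟨u.ne_zero, hu.2.1, by rw [← Units.val_inv_eq_inv_val]; exact hu.2.2⟩

theorem isIntUnit_iff_exists_mul_eq_one {z : E} (hz : z ∈ 𝒪) :
    IsIntUnit p z ↔ ∃ w ∈ 𝒪, z * w = 1 := by
  constructor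
  · rintro ⟨hz0, -, hinv⟩
    exact ⟨z⁻¹, hinv, mul_inv_cancel₀ hz0⟩
  · rintro ⟨w, hw, hzw⟩
    have hz0 : z ≠ 0 := left_ne_zero_of_mul_eq_one hzw
    exact ⟨hz0, hz, by rwa [inv_eq_of_mul_eq_one_right hzw]⟩

theorem IsIntBasis.isIntUnit_iff [Algebra ℚ_[p] E] (hE : Unramified p E) (hθ : IsIntBasis p E θ)
    (x y : ℤ_[p]) :
    IsIntUnit p (algebraMap ℤ_[p] E x + algebraMap ℤ_[p] E y * θ) ↔ IsUnit x ∨ IsUnit y := by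
  rw [isIntUnit_iff_exists_mul_eq_one (hθ.mem x y), hE.2 _ (hθ.mem x y),
    hθ.exists_eq_p_mul_iff, ← PadicInt.not_isUnit_iff_dvd, ← PadicInt.not_isUnit_iff_dvd,
    ← not_or, not_not]

variable (p) in
/-- `z ≡ e z' (mod p^m 𝒪_E)` for some `e ∈ ℤ_p^×`; on `𝒪_E^×` this is congruence modulo
`ℤ_p^× 𝒪_{E,m}^×`. -/
def ProjModEq (m : ℕ) (z z' : E) : Prop :=
  ∃ e : ℤ_[p], IsUnit e ∧ ∃ w ∈ 𝒪, z = algebraMap ℤ_[p] E e * z' + (p : E) ^ m * w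

namespace ProjModEq

variable {m : ℕ} {z z' z'' : E}

theorem symm (h : ProjModEq p m z z') : ProjModEq p m z' z := by
  obtain ⟨_, ⟨e, rfl⟩, w, hw, rfl⟩ := h
  refine ⟨↑e⁻¹, e⁻¹.isUnit, -(algebraMap ℤ_[p] E ↑e⁻¹ * w),
    neg_mem (mul_mem (Subalgebra.algebraMap_mem _ _) hw), ?_⟩
  have he : algebraMap ℤ_[p] E ↑e⁻¹ * algebraMap ℤ_[p] E ↑e = 1 := by
    rw [← map_mul, Units.inv_mul, map_one]
  linear_combination (-z') * he

theorem trans (h : ProjModEq p m z z') (h' : ProjModEq p m z' z'') : ProjModEq p m z z'' := by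
  obtain ⟨e, he, w, hw, rfl⟩ := h
  obtain ⟨e', he', w', hw', rfl⟩ := h'
  refine ⟨e * e', he.mul he', w + algebraMap ℤ_[p] E e * w',
    add_mem hw (mul_mem (Subalgebra.algebraMap_mem _ _) hw'), ?_⟩
  rw [map_mul]
  ring

theorem mono {k : ℕ} (hk : k ≤ m) (h : ProjModEq p m z z') : ProjModEq p k z z' := by
  obtain ⟨e, he, w, hw, rfl⟩ := h
  refine ⟨e, he, (p : E) ^ (m - k) * w, mul_mem (pow_mem (natCast_mem _ p) _) hw, ?_⟩
  rw [← mul_assoc, ← pow_add, Nat.add_sub_cancel' hk]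

theorem mul_left {v : E} (hv : v ∈ 𝒪) (h : ProjModEq p m z z') :
    ProjModEq p m (v * z) (v * z') := by
  obtain ⟨e, he, w, hw, rfl⟩ := h
  exact ⟨e, he, v * w, mul_mem hv hw, by ring⟩

end ProjModEq

theorem IsIntBasis.projModEq_iff (hθ : IsIntBasis p E θ) {m : ℕ} {x y x' y' : ℤ_[p]} :
    ProjModEq p m (algebraMap ℤ_[p] E x + algebraMap ℤ_[p] E y * θ)
        (algebraMap ℤ_[p] E x' + algebraMap ℤ_[p] E y' * θ) ↔
      ∃ e : ℤ_[p], IsUnit e ∧ (p : ℤ_[p]) ^ m ∣ x - e * x' ∧ (p : ℤ_[p]) ^ m ∣ y - e * y' := by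
  constructor
  · rintro ⟨e, he, w, hw, h⟩
    obtain ⟨s, t, rfl⟩ := hθ.exists_eq hw
    obtain ⟨hx, hy⟩ := hθ.eq_of_eq (x' := e * x' + p ^ m * s) (y' := e * y' + p ^ m * t) (by
      rw [h]; simp only [map_add, map_mul, map_pow, map_natCast]; ring)
    exact ⟨e, he, ⟨s, by rw [hx]; ring⟩, ⟨t, by rw [hy]; ring⟩⟩
  · rintro ⟨e, he, ⟨s, hs⟩, ⟨t, ht⟩⟩
    refine ⟨e, he, _, hθ.mem s t, ?_⟩
    rw [sub_eq_iff_eq_add] at hs ht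
    rw [hs, ht]
    simp only [map_add, map_mul, map_pow, map_natCast]
    ring

theorem IsIntBasis.projModEq_one_add_mul_iff (hθ : IsIntBasis p E θ) {m : ℕ} {b b' : ℤ_[p]} :
    ProjModEq p m (1 + algebraMap ℤ_[p] E b * θ) (1 + algebraMap ℤ_[p] E b' * θ) ↔
      (p : ℤ_[p]) ^ m ∣ b - b' := by
  rw [← map_one (algebraMap ℤ_[p] E), hθ.projModEq_iff]
  constructor
  · rintro ⟨e, -, h1, hb⟩
    exact dvd_sub_of_dvd_one_sub (by rwa [mul_one] at h1) hb
  · intro h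
    exact ⟨1, isUnit_one, by simp, by rwa [one_mul]⟩

theorem IsIntBasis.projModEq_add_iff (hθ : IsIntBasis p E θ) {m : ℕ} {a a' : ℤ_[p]} :
    ProjModEq p m (algebraMap ℤ_[p] E a + θ) (algebraMap ℤ_[p] E a' + θ) ↔
      (p : ℤ_[p]) ^ m ∣ a - a' := by
  rw [← one_mul θ, ← map_one (algebraMap ℤ_[p] E), hθ.projModEq_iff]
  constructor
  · rintro ⟨e, -, ha, h1⟩
    exact dvd_sub_of_dvd_one_sub (by rwa [mul_one] at h1) ha
  · intro h
    exact ⟨1, isUnit_one, by rwa [one_mul], by simp⟩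

theorem IsIntBasis.not_projModEq_one_add_mul_add (hθ : IsIntBasis p E θ) {m : ℕ} (hm : 0 < m)
    (b : ℤ_[p]) {a : ℤ_[p]} (ha : (p : ℤ_[p]) ∣ a) :
    ¬ ProjModEq p m (1 + algebraMap ℤ_[p] E b * θ) (algebraMap ℤ_[p] E a + θ) := by
  have hcoord := hθ.projModEq_iff (m := m) (x := 1) (y := b) (x' := a) (y' := 1)
  rw [map_one, one_mul] at hcoord
  rw [hcoord]
  rintro ⟨e, -, h1, -⟩
  have hp1 : (p : ℤ_[p]) ∣ 1 :=
    (dvd_sub_left (ha.mul_left e)).1 ((dvd_pow_self _ hm.ne').trans h1)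
  exact PadicInt.prime_p.not_dvd_one hp1

theorem chiV_eq_one_of_memOEi {χ : Eˣ →* ℂˣ} {m : ℕ}
    (hχ : ∀ u : Eˣ, MemOEiUnits p E m u → χ u = 1) {q : E} (hq : IsIntUnit p q)
    (hmem : MemOEi p E m q) : chiV χ q = 1 := by
  have h := hχ (Units.mk0 q hq.1) ⟨hmem, hq.2.1, by simpa using hq.2.2⟩
  rw [← Units.val_mk0 hq.1, chiV_coe, h, Units.val_one]

end IntegralBasis

section Character

variable {p : ℕ} [Fact p.Prime] {E : Type*} [Field E] [Algebra ℚ_[p] E] [Algebra ℤ_[p] E]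
  [IsScalarTower ℤ_[p] ℚ_[p] E] {χ : Eˣ →* ℂˣ}

theorem chiV_algebraMap_units (hχQ : TrivialOnQp p E χ) (e : ℤ_[p]ˣ) :
    chiV χ (algebraMap ℤ_[p] E e) = 1 := by
  have hval : ((Units.map (algebraMap ℚ_[p] E).toMonoidHom
      (Units.map (algebraMap ℤ_[p] ℚ_[p]).toMonoidHom e) : Eˣ) : E) = algebraMap ℤ_[p] E e :=
    (IsScalarTower.algebraMap_apply ℤ_[p] ℚ_[p] E e).symm
  rw [← hval, chiV_coe, hχQ, Units.val_one]

theorem chiV_eq_of_projModEq (hχQ : TrivialOnQp p E χ) {m : ℕ}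
    (hχ : ∀ u : Eˣ, MemOEiUnits p E m u → χ u = 1) {z z' : E} (hz : IsIntUnit p z)
    (hz' : IsIntUnit p z') (h : ProjModEq p m z z') : chiV χ z = chiV χ z' := by
  obtain ⟨_, ⟨e, rfl⟩, w, hw, rfl⟩ := h
  set c := algebraMap ℤ_[p] E e * z'
  have hc : IsIntUnit p c := (isIntUnit_algebraMap e).mul hz'
  have hq : MemOEi p E m (c⁻¹ * (c + (p : E) ^ m * w)) :=
    ⟨1, c⁻¹ * w, mul_mem hc.inv.2.1 hw, by rw [map_one, mul_add, inv_mul_cancel₀ hc.1]; ring⟩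
  calc chiV χ (c + (p : E) ^ m * w) = chiV χ (c * (c⁻¹ * (c + (p : E) ^ m * w))) := by
        rw [mul_inv_cancel_left₀ hc.1]
    _ = chiV χ z' := by
        rw [chiV_mul χ hc.1 (hc.inv.mul hz).1, chiV_eq_one_of_memOEi hχ (hc.inv.mul hz) hq,
          mul_one, chiV_mul χ (isIntUnit_algebraMap (p := p) e).1 hz'.1,
          chiV_algebraMap_units hχQ, one_mul]

theorem sum_inv_chiV_eq_zero (hχQ : TrivialOnQp p E χ) {m : ℕ}
    (hχ : ∀ u : Eˣ, MemOEiUnits p E m u → χ u = 1) {ι : Type*} {s : Finset ι} {z : ι → E}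
    (hz : ∀ i ∈ s, IsIntUnit p (z i))
    (hinj : ∀ i ∈ s, ∀ j ∈ s, ProjModEq p m (z i) (z j) → i = j)
    {v : E} (hv : IsIntUnit p v) (hχv : chiV χ v ≠ 1)
    (hmaps : ∀ i ∈ s, ∃ j ∈ s, ProjModEq p m (v * z i) (z j)) :
    ∑ i ∈ s, (chiV χ (z i))⁻¹ = 0 := by
  choose! τ hτs hτ using hmaps
  refine Finset.sum_eq_zero_of_comp_eq_mul (τ := τ) hτs ?_ (inv_ne_one.2 hχv)
    fun i hi => ?_
  · intro i hi i' hi' hττ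
    have h := (hτ i hi).trans (hττ ▸ (hτ i' hi').symm)
    refine hinj i hi i' hi' ?_
    simpa only [inv_mul_cancel_left₀ hv.1] using h.mul_left hv.inv.2.1
  · rw [← chiV_eq_of_projModEq hχQ hχ (hv.mul (hz i hi)) (hz _ (hτs i hi)) (hτ i hi),
      chiV_mul χ hv.1 (hz i hi).1, mul_inv]

end Character

section ProjectiveLine

variable {p : ℕ} [Fact p.Prime] {E : Type*} [Field E] [Algebra ℤ_[p] E] {θ : E}

local notation "𝒪" => integralClosure ℤ_[p] E

theorem projModEq_one_of_memOEiUnits [Algebra ℚ_[p] E] (hE : Unramified p E) {m : ℕ}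
    (hm : 0 < m) {u : Eˣ} (hu : MemOEiUnits p E m u) : ProjModEq p m (u : E) 1 := by
  obtain ⟨⟨a, w, hw, hau⟩, hu𝒪, hu𝒪'⟩ := hu
  refine ⟨a, ?_, w, hw, by rw [hau, mul_one]⟩
  by_contra ha
  obtain ⟨a', rfl⟩ := PadicInt.not_isUnit_iff_dvd.1 ha
  refine (hE.2 _ hu𝒪).1 ⟨_, hu𝒪', u.mul_inv⟩
    ⟨algebraMap ℤ_[p] E a' + (p : E) ^ (m - 1) * w,
      add_mem (Subalgebra.algebraMap_mem _ _) (mul_mem (pow_mem (natCast_mem _ p) _) hw), ?_⟩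
  rw [hau, map_mul, map_natCast, mul_add, ← mul_assoc, ← pow_succ', Nat.sub_add_cancel hm]

variable (p θ) in
/-- The points `[1 : b]` and `[a : 1]` of `ℙ¹(ℤ_p)`, realised as `1 + bθ` and `a + θ` in `𝒪_E`. -/
noncomputable def projLineElt : ℤ_[p] ⊕ ℤ_[p] → E :=
  Sum.elim (fun b => 1 + algebraMap ℤ_[p] E b * θ) (fun a => algebraMap ℤ_[p] E a + θ)

theorem projLineElt_inl (b : ℤ_[p]) :
    projLineElt p θ (.inl b) = algebraMap ℤ_[p] E 1 + algebraMap ℤ_[p] E b * θ := by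
  rw [projLineElt, Sum.elim_inl, map_one]

theorem projLineElt_inr (a : ℤ_[p]) :
    projLineElt p θ (.inr a) = algebraMap ℤ_[p] E a + algebraMap ℤ_[p] E 1 * θ := by
  rw [projLineElt, Sum.elim_inr, map_one, one_mul]

theorem IsIntBasis.isIntUnit_projLineElt [Algebra ℚ_[p] E] (hE : Unramified p E)
    (hθ : IsIntBasis p E θ) (j : ℤ_[p] ⊕ ℤ_[p]) : IsIntUnit p (projLineElt p θ j) := by
  rcases j with b | a
  · rw [projLineElt_inl]
    exact (hθ.isIntUnit_iff hE 1 b).2 (Or.inl isUnit_one)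
  · rw [projLineElt_inr]
    exact (hθ.isIntUnit_iff hE a 1).2 (Or.inr isUnit_one)

variable {n : ℕ} {T A : Finset ℤ_[p]}

theorem IsIntBasis.eq_of_projModEq_projLineElt (hθ : IsIntBasis p E θ) (hn : 0 < n)
    (hT : ∀ x : ℤ_[p], ∃! b, b ∈ T ∧ (p : ℤ_[p]) ^ n ∣ (x - b))
    (hAmem : ∀ a ∈ A, (p : ℤ_[p]) ∣ a)
    (hA : ∀ x : ℤ_[p], (p : ℤ_[p]) ∣ x → ∃! a, a ∈ A ∧ (p : ℤ_[p]) ^ n ∣ (x - a)) :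
    ∀ i ∈ T.disjSum A, ∀ j ∈ T.disjSum A,
      ProjModEq p n (projLineElt p θ i) (projLineElt p θ j) → i = j := by
  rintro (b | a) hi (b' | a') hj h <;>
    simp only [Finset.inl_mem_disjSum, Finset.inr_mem_disjSum] at hi hj
  · exact congrArg Sum.inl
      ((hT b).unique ⟨hi, by simp⟩ ⟨hj, hθ.projModEq_one_add_mul_iff.1 h⟩)
  · exact absurd h (hθ.not_projModEq_one_add_mul_add hn b (hAmem a' hj))
  · exact absurd h.symm (hθ.not_projModEq_one_add_mul_add hn b' (hAmem a hi))
  · exact congrArg Sum.inr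
      ((hA a (hAmem a hi)).unique ⟨hi, by simp⟩ ⟨hj, hθ.projModEq_add_iff.1 h⟩)

theorem IsIntBasis.exists_projModEq_one_add_mul_of_isUnit (hθ : IsIntBasis p E θ)
    (hT : ∀ x : ℤ_[p], ∃! b, b ∈ T ∧ (p : ℤ_[p]) ^ n ∣ (x - b)) {x y : ℤ_[p]} (hx : IsUnit x) :
    ∃ b ∈ T, ProjModEq p n (algebraMap ℤ_[p] E x + algebraMap ℤ_[p] E y * θ)
      (projLineElt p θ (.inl b)) := by
  obtain ⟨b, ⟨hb, k, hk⟩, -⟩ := hT (↑hx.unit⁻¹ * y)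
  refine ⟨b, hb, ?_⟩
  rw [projLineElt_inl, hθ.projModEq_iff]
  refine ⟨x, hx, by simp, x * k, ?_⟩
  linear_combination x * hk - y * hx.mul_val_inv

theorem IsIntBasis.exists_projModEq_add_of_isUnit (hθ : IsIntBasis p E θ)
    (hA : ∀ x : ℤ_[p], (p : ℤ_[p]) ∣ x → ∃! a, a ∈ A ∧ (p : ℤ_[p]) ^ n ∣ (x - a))
    {x y : ℤ_[p]} (hx : (p : ℤ_[p]) ∣ x) (hy : IsUnit y) :
    ∃ a ∈ A, ProjModEq p n (algebraMap ℤ_[p] E x + algebraMap ℤ_[p] E y * θ)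
      (projLineElt p θ (.inr a)) := by
  obtain ⟨a, ⟨ha, k, hk⟩, -⟩ := hA (↑hy.unit⁻¹ * x) (hx.mul_left _)
  refine ⟨a, ha, ?_⟩
  rw [projLineElt_inr, hθ.projModEq_iff]
  refine ⟨y, hy, ⟨y * k, ?_⟩, by simp⟩
  linear_combination y * hk - x * hy.mul_val_inv

theorem IsIntBasis.exists_projModEq_projLineElt [Algebra ℚ_[p] E] (hE : Unramified p E)
    (hθ : IsIntBasis p E θ) (hT : ∀ x : ℤ_[p], ∃! b, b ∈ T ∧ (p : ℤ_[p]) ^ n ∣ (x - b))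
    (hA : ∀ x : ℤ_[p], (p : ℤ_[p]) ∣ x → ∃! a, a ∈ A ∧ (p : ℤ_[p]) ^ n ∣ (x - a))
    {z : E} (hz : IsIntUnit p z) : ∃ j ∈ T.disjSum A, ProjModEq p n z (projLineElt p θ j) := by
  obtain ⟨x, y, rfl⟩ := hθ.exists_eq hz.2.1
  by_cases hx : IsUnit x
  · obtain ⟨b, hb, h⟩ := hθ.exists_projModEq_one_add_mul_of_isUnit (y := y) hT hx
    exact ⟨.inl b, Finset.inl_mem_disjSum.2 hb, h⟩
  · have hy := ((hθ.isIntUnit_iff hE x y).1 hz).resolve_left hx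
    obtain ⟨a, ha, h⟩ := hθ.exists_projModEq_add_of_isUnit hA (PadicInt.not_isUnit_iff_dvd.1 hx) hy
    exact ⟨.inr a, Finset.inr_mem_disjSum.2 ha, h⟩

theorem IsIntBasis.exists_projModEq_one_add_mul (hθ : IsIntBasis p E θ)
    (hT : ∀ x : ℤ_[p], ∃! b, b ∈ T ∧ (p : ℤ_[p]) ^ n ∣ (x - b)) {z : E} (hz : z ∈ 𝒪)
    {b : ℤ_[p]} (h : ProjModEq p 1 z (projLineElt p θ (.inl b))) :
    ∃ b' ∈ T, ProjModEq p n z (projLineElt p θ (.inl b')) := by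
  obtain ⟨x, y, rfl⟩ := hθ.exists_eq hz
  rw [projLineElt_inl, hθ.projModEq_iff] at h
  obtain ⟨e, he, hxe, -⟩ := h
  refine hθ.exists_projModEq_one_add_mul_of_isUnit hT (by_contra fun hx => ?_)
  rw [pow_one, mul_one] at hxe
  exact PadicInt.not_isUnit_iff_dvd.2 ((dvd_sub_right (PadicInt.not_isUnit_iff_dvd.1 hx)).1 hxe) he

end ProjectiveLine

section CharacterSums

variable {p : ℕ} [Fact p.Prime] {E : Type*} [Field E] [Algebra ℚ_[p] E] [Algebra ℤ_[p] E]
  [IsScalarTower ℤ_[p] ℚ_[p] E] {θ : E} {χ : Eˣ →* ℂˣ} {n : ℕ} {T A : Finset ℤ_[p]}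

theorem IsIntBasis.sum_inv_chiV_projLineElt_eq_zero (hE : Unramified p E)
    (hθ : IsIntBasis p E θ) (hχQ : TrivialOnQp p E χ)
    (hχ : ∀ u : Eˣ, MemOEiUnits p E n u → χ u = 1) (hn : 0 < n)
    (hT : ∀ x : ℤ_[p], ∃! b, b ∈ T ∧ (p : ℤ_[p]) ^ n ∣ (x - b))
    (hAmem : ∀ a ∈ A, (p : ℤ_[p]) ∣ a)
    (hA : ∀ x : ℤ_[p], (p : ℤ_[p]) ∣ x → ∃! a, a ∈ A ∧ (p : ℤ_[p]) ^ n ∣ (x - a))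
    {v : E} (hv : IsIntUnit p v) (hχv : chiV χ v ≠ 1) :
    ∑ j ∈ T.disjSum A, (chiV χ (projLineElt p θ j))⁻¹ = 0 :=
  sum_inv_chiV_eq_zero hχQ hχ (fun j _ => hθ.isIntUnit_projLineElt hE j)
    (hθ.eq_of_projModEq_projLineElt hn hT hAmem hA) hv hχv
    fun j _ => hθ.exists_projModEq_projLineElt hE hT hA (hv.mul (hθ.isIntUnit_projLineElt hE j))

theorem IsIntBasis.sum_inv_chiV_one_add_mul_eq_zero (hE : Unramified p E)
    (hθ : IsIntBasis p E θ) (hχQ : TrivialOnQp p E χ)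
    (hχ : ∀ u : Eˣ, MemOEiUnits p E n u → χ u = 1)
    (hT : ∀ x : ℤ_[p], ∃! b, b ∈ T ∧ (p : ℤ_[p]) ^ n ∣ (x - b)) {m : ℕ} (hm : 0 < m)
    {u : Eˣ} (hu : MemOEiUnits p E m u) (hχu : χ u ≠ 1) :
    ∑ b ∈ T, (chiV χ (1 + algebraMap ℤ_[p] E b * θ))⁻¹ = 0 := by
  have hunit := hθ.isIntUnit_projLineElt hE
  have hu1 : ProjModEq p 1 (u : E) 1 := (projModEq_one_of_memOEiUnits hE hm hu).mono hm
  have hmul (b : ℤ_[p]) :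
      ProjModEq p 1 (u * projLineElt p θ (.inl b)) (projLineElt p θ (.inl b)) := by
    have h := hu1.mul_left (hunit (.inl b)).2.1
    rwa [mul_one, mul_comm _ (u : E)] at h
  exact sum_inv_chiV_eq_zero (z := fun b => projLineElt p θ (.inl b)) hχQ hχ
    (fun b _ => hunit (.inl b))
    (fun b hb b' hb' h => (hT b).unique ⟨hb, by simp⟩ ⟨hb', hθ.projModEq_one_add_mul_iff.1 h⟩)
    (isIntUnit_of_memOEiUnits hu) (by rwa [chiV_coe, ne_eq, Units.val_eq_one])
    fun b _ => hθ.exists_projModEq_one_add_mul hT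
      ((isIntUnit_of_memOEiUnits hu).mul (hunit (.inl b))).2.1 (hmul b)

end CharacterSums

end ArakawaQuad

/-- **Lemma 3.6(1)** (inert prime case). Let `E/ℚ_p` be an unramified quadratic
extension, `{1, θ}` a `ℤ_p`-basis of `𝒪_E`, and `χ : E^× → ℂ^×` trivial on `ℚ_p^×`
with conductor exponent `n > 0`. Then (both sums being well defined, the summands
depending only on the indicated residue classes)
`∑_b χ(1+bθ)⁻¹ = -∑_a χ(a+θ)⁻¹`, where `b` runs over representatives of
`ℤ_p/p^n ℤ_p` and `a` over representatives of `p ℤ_p/p^n ℤ_p`; the common value is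
`-χ(θ)⁻¹` if `n = 1` and `0` if `n > 1`. -/
theorem lemma_3_6_1 (p : ℕ) [Fact p.Prime]
    (E : Type*) [Field E] [Algebra ℚ_[p] E] [Algebra ℤ_[p] E]
    [IsScalarTower ℤ_[p] ℚ_[p] E]
    (hE : Unramified p E) (θ : E) (hθ : IsIntBasis p E θ)
    (χ : Eˣ →* ℂˣ) (hχQ : TrivialOnQp p E χ)
    (n : ℕ) (hn : 0 < n) (hχn : CondExp p E χ n)
    (T A : Finset ℤ_[p])
    (hT : ∀ x : ℤ_[p], ∃! b, b ∈ T ∧ (p : ℤ_[p]) ^ n ∣ (x - b))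
    (hAmem : ∀ a ∈ A, (p : ℤ_[p]) ∣ a)
    (hA : ∀ x : ℤ_[p], (p : ℤ_[p]) ∣ x → ∃! a, a ∈ A ∧ (p : ℤ_[p]) ^ n ∣ (x - a)) :
    (∀ b b' : ℤ_[p], (p : ℤ_[p]) ^ n ∣ (b - b') →
        chiV χ (1 + algebraMap ℤ_[p] E b * θ)
          = chiV χ (1 + algebraMap ℤ_[p] E b' * θ)) ∧
    (∀ a a' : ℤ_[p], (p : ℤ_[p]) ∣ a → (p : ℤ_[p]) ∣ a' → (p : ℤ_[p]) ^ n ∣ (a - a') →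
        chiV χ (algebraMap ℤ_[p] E a + θ)
          = chiV χ (algebraMap ℤ_[p] E a' + θ)) ∧
    (∑ b ∈ T, (chiV χ (1 + algebraMap ℤ_[p] E b * θ))⁻¹
      = - ∑ a ∈ A, (chiV χ (algebraMap ℤ_[p] E a + θ))⁻¹) ∧
    (n = 1 → ∑ b ∈ T, (chiV χ (1 + algebraMap ℤ_[p] E b * θ))⁻¹
      = - (chiV χ θ)⁻¹) ∧
    (1 < n → ∑ b ∈ T, (chiV χ (1 + algebraMap ℤ_[p] E b * θ))⁻¹ = 0) := by
  obtain ⟨hχn, hχn'⟩ := hχn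
  obtain ⟨u, hu, hχu⟩ := hχn' hn
  have hunit := hθ.isIntUnit_projLineElt hE
  have hcongr_one_add_mul : ∀ b b' : ℤ_[p], (p : ℤ_[p]) ^ n ∣ (b - b') →
      chiV χ (1 + algebraMap ℤ_[p] E b * θ) = chiV χ (1 + algebraMap ℤ_[p] E b' * θ) :=
    fun b b' h => chiV_eq_of_projModEq hχQ hχn (hunit (.inl b)) (hunit (.inl b'))
      (hθ.projModEq_one_add_mul_iff.2 h)
  have hcongr_add : ∀ a a' : ℤ_[p], (p : ℤ_[p]) ∣ a → (p : ℤ_[p]) ∣ a' →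
      (p : ℤ_[p]) ^ n ∣ (a - a') →
      chiV χ (algebraMap ℤ_[p] E a + θ) = chiV χ (algebraMap ℤ_[p] E a' + θ) :=
    fun a a' _ _ h => chiV_eq_of_projModEq hχQ hχn (hunit (.inr a)) (hunit (.inr a'))
      (hθ.projModEq_add_iff.2 h)
  have hsum : ∑ b ∈ T, (chiV χ (1 + algebraMap ℤ_[p] E b * θ))⁻¹
      = - ∑ a ∈ A, (chiV χ (algebraMap ℤ_[p] E a + θ))⁻¹ := by
    have h := hθ.sum_inv_chiV_projLineElt_eq_zero hE hχQ hχn hn hT hAmem hA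
      (isIntUnit_of_memOEiUnits hu) (by rwa [chiV_coe, ne_eq, Units.val_eq_one])
    rw [Finset.sum_disjSum] at h
    exact eq_neg_of_add_eq_zero_left h
  refine ⟨hcongr_one_add_mul, hcongr_add, hsum, fun hn1 => ?_,
    fun hn1 => hθ.sum_inv_chiV_one_add_mul_eq_zero hE hχQ hχn hT (by omega) hu hχu⟩
  subst hn1
  obtain ⟨a₀, ⟨ha₀, -⟩, huniq⟩ := hA 0 (dvd_zero _)
  have hA₀ : A = {a₀} := Finset.eq_singleton_iff_unique_mem.2
    ⟨ha₀, fun a ha => huniq a ⟨ha, by simpa using hAmem a ha⟩⟩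
  rw [hsum, hA₀, Finset.sum_singleton,
    hcongr_add a₀ 0 (hAmem a₀ ha₀) (dvd_zero _) (by simpa using hAmem a₀ ha₀), map_zero, zero_add]
end

section
/- Fix an integer $i \ge 1$. Then every $x \in E^\times$ belongs to the double coset $\mathbb{Q}_p^\times\, y\, \mathcal{O}_{E,i}^\times$ for exactly one element $y$ of the following list: $y = 1 + b\theta$ with $b$ ranging over a complete set of representatives of $\mathbb{Z}_p/p^i\mathbb{Z}_p$, or $y = a + \theta$ with $a$ ranging over a complete set of representatives of $p\mathbb{Z}_p/p^i\mathbb{Z}_p$ (the double coset of $y$ depending only on the residue class of $b$, respectively $a$). -/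
open scoped Classical

open ArakawaQuad

/-!
Write `x = q + rθ` with `q, r ∈ ℚ_p` and divide by the coordinate of larger norm: this puts `x`
in `ℚ_p^× (1 + bθ)` or in `ℚ_p^× (a + θ)` with `p ∣ a`. Every `u ∈ 𝒪_{E,i}^×` is `s + p^i w` with
`s ∈ ℤ_p^×` and `w ∈ 𝒪_E`, so if `a' + b'θ = t (a + bθ) u`, then `(a', b')` is proportional to a
pair congruent to `s (a, b)` modulo `p^i`, whence `p^i ∣ ab' - a'b`; this determinant separates
the listed representatives. Conversely, since `p 𝒪_E` is the maximal ideal, the listed `y` are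
units of `𝒪_E`, and two units of `𝒪_E` congruent modulo `p^i` differ by a factor in `𝒪_{E,i}^×`.
-/

namespace ArakawaQuad

variable {p : ℕ} [Fact p.Prime] {E : Type*} [Field E] [Algebra ℤ_[p] E] {i : ℕ} {θ : E}

theorem MemOEiUnits.one : MemOEiUnits p E i 1 :=
  ⟨⟨1, 0, zero_mem _, by simp⟩, (OEUnits p E).one_mem⟩

theorem MemOEiUnits.mul {u v : Eˣ} (hu : MemOEiUnits p E i u) (hv : MemOEiUnits p E i v) :
    MemOEiUnits p E i (u * v) := by
  obtain ⟨⟨a, w, hw, hua⟩, huO⟩ := hu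
  obtain ⟨⟨b, w', hw', hvb⟩, hvO⟩ := hv
  refine ⟨⟨a * b, algebraMap ℤ_[p] E a * w' + algebraMap ℤ_[p] E b * w + (p : E) ^ i * (w * w'),
    ?_, ?_⟩, (OEUnits p E).mul_mem huO hvO⟩
  · have hpi : (p : E) ^ i ∈ integralClosure ℤ_[p] E := pow_mem (natCast_mem _ p) i
    aesop (add safe Subalgebra.algebraMap_mem)
  · rw [Units.val_mul, hua, hvb, map_mul]
    ring

theorem IsIntBasis.add_mul_mem (hθ : IsIntBasis p E θ) (a b : ℤ_[p]) :
    algebraMap ℤ_[p] E a + algebraMap ℤ_[p] E b * θ ∈ integralClosure ℤ_[p] E :=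
  add_mem (Subalgebra.algebraMap_mem _ a) (mul_mem (Subalgebra.algebraMap_mem _ b) hθ.1)

theorem IsIntBasis.coords_injective (hθ : IsIntBasis p E θ) {a b a' b' : ℤ_[p]}
    (h : algebraMap ℤ_[p] E a + algebraMap ℤ_[p] E b * θ
      = algebraMap ℤ_[p] E a' + algebraMap ℤ_[p] E b' * θ) : a = a' ∧ b = b' := by
  obtain ⟨_, -, huniq⟩ := hθ.2 _ (hθ.add_mul_mem a b)
  exact Prod.ext_iff.mp ((huniq (a, b) rfl).trans (huniq (a', b') h).symm)

variable [Algebra ℚ_[p] E]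

theorem InCoset.of_eq_algebraMap_mul {y x : E} (t : ℚ_[p]ˣ) (h : x = algebraMap ℚ_[p] E t * y) :
    InCoset p E i y x :=
  ⟨t, 1, .one, by simpa using h⟩

theorem InCoset.trans {x y z : E} (h₁ : InCoset p E i x y) (h₂ : InCoset p E i y z) :
    InCoset p E i x z := by
  obtain ⟨t, u, hu, rfl⟩ := h₁
  obtain ⟨t', u', hu', rfl⟩ := h₂
  refine ⟨t' * t, u * u', hu.mul hu', ?_⟩
  rw [Units.val_mul, Units.val_mul, map_mul]
  ring

theorem inCoset_of_eq_add_pow_mul {z z' : Eˣ} (hz : z ∈ OEUnits p E) (hz' : z' ∈ OEUnits p E)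
    {c : E} (hc : c ∈ integralClosure ℤ_[p] E) (h : (z' : E) = z + (p : E) ^ i * c) :
    InCoset p E i z z' := by
  refine ⟨1, z⁻¹ * z', ⟨⟨1, ↑z⁻¹ * c, mul_mem hz.2 hc, ?_⟩,
    (OEUnits p E).mul_mem ((OEUnits p E).inv_mem hz) hz'⟩, ?_⟩
  · rw [Units.val_mul, h, mul_add, Units.inv_mul, map_one]
    ring
  · rw [Units.val_one, map_one, one_mul, Units.val_mul, Units.mul_inv_cancel_left]

theorem Unramified.exists_mem_oeUnits (hE : Unramified p E) (hθ : IsIntBasis p E θ)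
    {a b : ℤ_[p]} (hab : ¬ ((p : ℤ_[p]) ∣ a ∧ (p : ℤ_[p]) ∣ b)) :
    ∃ z : Eˣ, z ∈ OEUnits p E ∧ (z : E) = algebraMap ℤ_[p] E a + algebraMap ℤ_[p] E b * θ := by
  have hmem := hθ.add_mul_mem a b
  obtain ⟨w, hw, hzw⟩ := (hE.2 _ hmem).mpr <| by
    rintro ⟨v, hv, hzv⟩
    obtain ⟨⟨c, d⟩, rfl, -⟩ := hθ.2 v hv
    refine hab ?_
    obtain ⟨rfl, rfl⟩ := hθ.coords_injective (a' := p * c) (b' := p * d) <| by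
      rw [hzv]
      simp only [map_mul, map_natCast]
      ring
    exact ⟨dvd_mul_right _ _, dvd_mul_right _ _⟩
  exact ⟨Units.mkOfMulEqOne _ w hzw, ⟨hmem, hw⟩, rfl⟩

theorem inCoset_of_dvd_sub (hE : Unramified p E) (hθ : IsIntBasis p E θ) {a b a' b' : ℤ_[p]}
    (hab : ¬ ((p : ℤ_[p]) ∣ a ∧ (p : ℤ_[p]) ∣ b)) (hab' : ¬ ((p : ℤ_[p]) ∣ a' ∧ (p : ℤ_[p]) ∣ b'))
    (ha : (p : ℤ_[p]) ^ i ∣ a' - a) (hb : (p : ℤ_[p]) ^ i ∣ b' - b) :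
    InCoset p E i (algebraMap ℤ_[p] E a + algebraMap ℤ_[p] E b * θ)
      (algebraMap ℤ_[p] E a' + algebraMap ℤ_[p] E b' * θ) := by
  obtain ⟨z, hz, hza⟩ := hE.exists_mem_oeUnits hθ hab
  obtain ⟨z', hz', hza'⟩ := hE.exists_mem_oeUnits hθ hab'
  obtain ⟨c, hc⟩ := ha
  obtain ⟨d, hd⟩ := hb
  rw [← hza, ← hza']
  refine inCoset_of_eq_add_pow_mul hz hz' (hθ.add_mul_mem c d) ?_
  rw [hza, hza', sub_eq_iff_eq_add'.mp hc, sub_eq_iff_eq_add'.mp hd]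
  simp only [map_add, map_mul, map_pow, map_natCast]
  ring

variable [IsScalarTower ℤ_[p] ℚ_[p] E]

@[simp]
theorem algebraMap_padicInt_coe (a : ℤ_[p]) :
    algebraMap ℚ_[p] E (a : ℚ_[p]) = algebraMap ℤ_[p] E a := by
  rw [IsScalarTower.algebraMap_apply ℤ_[p] ℚ_[p] E, PadicInt.algebraMap_apply]

theorem algebraMap_mem_integralClosure_iff {q : ℚ_[p]} :
    algebraMap ℚ_[p] E q ∈ integralClosure ℤ_[p] E ↔ ∃ a : ℤ_[p], (a : ℚ_[p]) = q := by
  rw [mem_integralClosure_iff, ← IsScalarTower.toAlgHom_apply ℤ_[p],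
    isIntegral_algHom_iff _ (algebraMap ℚ_[p] E).injective, IsIntegrallyClosed.isIntegral_iff]
  rfl

theorem inv_natCast_notMem_integralClosure : (p : E)⁻¹ ∉ integralClosure ℤ_[p] E := by
  rw [← map_natCast (algebraMap ℚ_[p] E), ← map_inv₀, algebraMap_mem_integralClosure_iff]
  rintro ⟨a, ha⟩
  have hp : (p : ℚ_[p]) ≠ 0 := Nat.cast_ne_zero.mpr (Fact.out : p.Prime).ne_zero
  refine PadicInt.p_nonunit (IsUnit.of_mul_eq_one a (Subtype.ext ?_))
  simp [ha, hp]

theorem exists_unit_add_of_memOEiUnits {u : Eˣ} (hu : MemOEiUnits p E i u) :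
    ∃ s : ℤ_[p]ˣ, ∃ w ∈ integralClosure ℤ_[p] E,
      (u : E) = algebraMap ℤ_[p] E s + (p : E) ^ i * w := by
  obtain ⟨⟨a, w, hw, hua⟩, huO, hu'O⟩ := hu
  by_cases ha : IsUnit a
  · exact ⟨ha.unit, w, hw, hua⟩
  rcases Nat.eq_zero_or_pos i with rfl | hi
  · exact ⟨1, (u : E) - 1, sub_mem huO (one_mem _), by simp⟩
  -- otherwise `u ∈ p 𝒪_E`, and then `p⁻¹ = u⁻¹ · (u / p)` would be integral
  exfalso
  obtain ⟨a₁, rfl⟩ := (PadicInt.norm_lt_one_iff_dvd a).mp (PadicInt.not_isUnit_iff.mp ha)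
  apply inv_natCast_notMem_integralClosure (p := p) (E := E)
  have hmem : algebraMap ℤ_[p] E a₁ + (p : E) ^ (i - 1) * w ∈ integralClosure ℤ_[p] E :=
    add_mem (Subalgebra.algebraMap_mem _ _) (mul_mem (pow_mem (natCast_mem _ p) _) hw)
  convert mul_mem hu'O hmem using 1
  rw [Units.val_inv_eq_inv_val, eq_inv_mul_iff_mul_eq₀ u.ne_zero, hua, map_mul, map_natCast,
    ← pow_sub_one_mul hi.ne']
  have : CharZero E := charZero_of_injective_algebraMap (algebraMap ℚ_[p] E).injective
  field_simp [Nat.cast_ne_zero.mpr (Fact.out : p.Prime).ne_zero]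

theorem MemOEiUnits.inv {u : Eˣ} (hu : MemOEiUnits p E i u) : MemOEiUnits p E i u⁻¹ := by
  obtain ⟨s, w, hw, hus⟩ := exists_unit_add_of_memOEiUnits hu
  refine ⟨⟨↑s⁻¹, -(algebraMap ℤ_[p] E ↑s⁻¹ * w * ↑u⁻¹), ?_, ?_⟩, (OEUnits p E).inv_mem hu.2⟩
  · exact neg_mem (mul_mem (mul_mem (Subalgebra.algebraMap_mem _ _) hw) hu.2.2)
  · have hs : algebraMap ℤ_[p] E ↑s⁻¹ * algebraMap ℤ_[p] E s = 1 := by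
      rw [← map_mul, Units.inv_mul, map_one]
    have hu' : (u : E) * ↑u⁻¹ = 1 := u.mul_inv
    linear_combination (-(algebraMap ℤ_[p] E ↑s⁻¹ * ↑u⁻¹)) * hus
      + algebraMap ℤ_[p] E ↑s⁻¹ * hu' - (↑u⁻¹ : E) * hs

theorem InCoset.symm {y x : E} (h : InCoset p E i y x) : InCoset p E i x y := by
  obtain ⟨t, u, hu, rfl⟩ := h
  refine ⟨t⁻¹, u⁻¹, hu.inv, ?_⟩
  have ht : algebraMap ℚ_[p] E t ≠ 0 := (map_ne_zero _).mpr t.ne_zero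
  rw [Units.val_inv_eq_inv_val, Units.val_inv_eq_inv_val, map_inv₀]
  field_simp [u.ne_zero]

theorem InCoset.inCoset_iff {y y' : E} (h : InCoset p E i y y') (x : E) :
    InCoset p E i y x ↔ InCoset p E i y' x :=
  ⟨h.symm.trans, h.trans⟩

namespace IsIntBasis

theorem notMem_range_algebraMap (hθ : IsIntBasis p E θ) :
    θ ∉ Set.range (algebraMap ℚ_[p] E) := by
  rintro ⟨q, rfl⟩
  obtain ⟨c, rfl⟩ := algebraMap_mem_integralClosure_iff.mp hθ.1
  refine zero_ne_one (hθ.coords_injective (a := c) (b := 0) (a' := 0) (b' := 1) ?_).2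
  simp

theorem coordsQ_injective (hθ : IsIntBasis p E θ) {q r q' r' : ℚ_[p]}
    (h : algebraMap ℚ_[p] E q + algebraMap ℚ_[p] E r * θ
      = algebraMap ℚ_[p] E q' + algebraMap ℚ_[p] E r' * θ) : q = q' ∧ r = r' := by
  obtain rfl : r = r' := by
    by_contra hr
    have hr' : algebraMap ℚ_[p] E (r - r') ≠ 0 := (map_ne_zero _).mpr (sub_ne_zero.mpr hr)
    refine hθ.notMem_range_algebraMap ⟨(q' - q) / (r - r'), ?_⟩
    rw [map_div₀, div_eq_iff hr', map_sub, map_sub]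
    linear_combination -h
  exact ⟨(algebraMap ℚ_[p] E).injective (add_right_cancel h), rfl⟩

theorem exists_coords (hθ : IsIntBasis p E θ) (hE : Module.finrank ℚ_[p] E = 2) (x : E) :
    ∃ q r : ℚ_[p], x = algebraMap ℚ_[p] E q + algebraMap ℚ_[p] E r * θ := by
  have : FiniteDimensional ℚ_[p] E := .of_finrank_eq_succ hE
  have hli : LinearIndependent ℚ_[p] ![(1 : E), θ] := by
    refine LinearIndependent.pair_iff.mpr fun s t hst => ?_
    refine hθ.coordsQ_injective (q' := 0) (r' := 0) ?_
    simpa [Algebra.smul_def] using hst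
  have hx : x ∈ Submodule.span ℚ_[p] (Set.range ![(1 : E), θ]) := by
    rw [hli.span_eq_top_of_card_eq_finrank (by simp [hE])]
    trivial
  rw [Matrix.range_cons_cons_empty] at hx
  obtain ⟨q, r, rfl⟩ := Submodule.mem_span_pair.mp hx
  exact ⟨q, r, by simp [Algebra.smul_def]⟩

theorem dvd_sub_of_inCoset (hθ : IsIntBasis p E θ) {a b a' b' : ℤ_[p]}
    (h : InCoset p E i (algebraMap ℤ_[p] E a + algebraMap ℤ_[p] E b * θ)
      (algebraMap ℤ_[p] E a' + algebraMap ℤ_[p] E b' * θ)) :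
    (p : ℤ_[p]) ^ i ∣ a * b' - a' * b := by
  obtain ⟨t, u, hu, hy⟩ := h
  obtain ⟨s, w, hw, hus⟩ := exists_unit_add_of_memOEiUnits hu
  obtain ⟨⟨c, d⟩, hcd, -⟩ := hθ.2 _ (mul_mem (hθ.add_mul_mem a b) hw)
  -- `u ≡ s (mod p^i)`, so the coordinates `(A, B)` of `(a + bθ) u` are `≡ s (a, b)`
  set A := (s : ℤ_[p]) * a + (p : ℤ_[p]) ^ i * c
  set B := (s : ℤ_[p]) * b + (p : ℤ_[p]) ^ i * d
  have hAB : algebraMap ℚ_[p] E (a' : ℚ_[p]) + algebraMap ℚ_[p] E (b' : ℚ_[p]) * θ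
      = algebraMap ℚ_[p] E (t * (A : ℚ_[p])) + algebraMap ℚ_[p] E (t * (B : ℚ_[p])) * θ := by
    simp only [map_mul, algebraMap_padicInt_coe, hy, hus, A, B, map_add, map_pow, map_natCast]
    linear_combination (algebraMap ℚ_[p] E t * (p : E) ^ i) * hcd
  obtain ⟨ha', hb'⟩ := hθ.coordsQ_injective hAB
  have hcross : a' * B = b' * A := by
    apply Subtype.ext
    push_cast [ha', hb']
    ring
  exact Units.dvd_mul_left.mp ⟨a' * d - b' * c, by linear_combination -hcross⟩

theorem exists_inCoset (hθ : IsIntBasis p E θ) (hE : Module.finrank ℚ_[p] E = 2) {x : E}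
    (hx : x ≠ 0) :
    (∃ b : ℤ_[p], InCoset p E i (1 + algebraMap ℤ_[p] E b * θ) x) ∨
      (∃ a : ℤ_[p], (p : ℤ_[p]) ∣ a ∧ InCoset p E i (algebraMap ℤ_[p] E a + θ) x) := by
  obtain ⟨q, r, rfl⟩ := hθ.exists_coords hE x
  rcases le_or_gt ‖r‖ ‖q‖ with h | h
  · have hq : q ≠ 0 := by
      rintro rfl
      obtain rfl : r = 0 := norm_le_zero_iff.mp (by simpa using h)
      simp at hx
    let b : ℤ_[p] := ⟨r / q, by rw [norm_div]; exact div_le_one_of_le₀ h (norm_nonneg _)⟩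
    have hb : algebraMap ℤ_[p] E b = algebraMap ℚ_[p] E r / algebraMap ℚ_[p] E q := by
      rw [← map_div₀, ← algebraMap_padicInt_coe]
    refine .inl ⟨b, .of_eq_algebraMap_mul (Units.mk0 q hq) ?_⟩
    have hq' : algebraMap ℚ_[p] E q ≠ 0 := (map_ne_zero _).mpr hq
    rw [hb, Units.val_mk0]
    field_simp
  · have hr : r ≠ 0 := by
      rintro rfl
      exact (norm_nonneg q).not_gt (by simpa using h)
    let a : ℤ_[p] := ⟨q / r, by rw [norm_div]; exact div_le_one_of_le₀ h.le (norm_nonneg _)⟩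
    have ha : ‖a‖ < 1 := by
      rw [PadicInt.norm_def, show (a : ℚ_[p]) = q / r from rfl, norm_div]
      exact (div_lt_one (norm_pos_iff.mpr hr)).mpr h
    have ha' : algebraMap ℤ_[p] E a = algebraMap ℚ_[p] E q / algebraMap ℚ_[p] E r := by
      rw [← map_div₀, ← algebraMap_padicInt_coe]
    refine .inr ⟨a, (PadicInt.norm_lt_one_iff_dvd a).mp ha,
      .of_eq_algebraMap_mul (Units.mk0 r hr) ?_⟩
    have hr' : algebraMap ℚ_[p] E r ≠ 0 := (map_ne_zero _).mpr hr
    rw [ha', Units.val_mk0]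
    field_simp

end IsIntBasis

end ArakawaQuad

/-- **Double coset decomposition `ℚ_p^× \ E^× / 𝒪_{E,i}^×`** (Section 3.2(2), inert
prime case). Let `E/ℚ_p` be an unramified quadratic extension and `{1, θ}` a
`ℤ_p`-basis of `𝒪_E`. For `i ≥ 1`, every `x ∈ E^×` lies in the double coset
`ℚ_p^× y 𝒪_{E,i}^×` for exactly one `y` of the list: `y = 1+bθ` with `b` over
representatives of `ℤ_p/p^i ℤ_p`, or `y = a+θ` with `a` over representatives of
`p ℤ_p/p^i ℤ_p` (the double coset of `y` depending only on the class of `b`,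
respectively `a`). -/
theorem double_coset_inert (p : ℕ) [Fact p.Prime]
    (E : Type*) [Field E] [Algebra ℚ_[p] E] [Algebra ℤ_[p] E]
    [IsScalarTower ℤ_[p] ℚ_[p] E]
    (hE : Unramified p E) (θ : E) (hθ : IsIntBasis p E θ) (i : ℕ) (hi : 1 ≤ i) :
    (∀ b b' : ℤ_[p], (p : ℤ_[p]) ^ i ∣ (b - b') →
      ∀ x : E, InCoset p E i (1 + algebraMap ℤ_[p] E b * θ) x ↔
        InCoset p E i (1 + algebraMap ℤ_[p] E b' * θ) x) ∧
    (∀ a a' : ℤ_[p], (p : ℤ_[p]) ∣ a → (p : ℤ_[p]) ∣ a' → (p : ℤ_[p]) ^ i ∣ (a - a') →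
      ∀ x : E, InCoset p E i (algebraMap ℤ_[p] E a + θ) x ↔
        InCoset p E i (algebraMap ℤ_[p] E a' + θ) x) ∧
    (∀ x : E, x ≠ 0 →
      ((∃ b : ℤ_[p], InCoset p E i (1 + algebraMap ℤ_[p] E b * θ) x) ∨
        (∃ a : ℤ_[p], (p : ℤ_[p]) ∣ a ∧ InCoset p E i (algebraMap ℤ_[p] E a + θ) x)) ∧
      (∀ b b' : ℤ_[p], InCoset p E i (1 + algebraMap ℤ_[p] E b * θ) x →
        InCoset p E i (1 + algebraMap ℤ_[p] E b' * θ) x → (p : ℤ_[p]) ^ i ∣ (b - b')) ∧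
      (∀ a a' : ℤ_[p], (p : ℤ_[p]) ∣ a → (p : ℤ_[p]) ∣ a' →
        InCoset p E i (algebraMap ℤ_[p] E a + θ) x →
        InCoset p E i (algebraMap ℤ_[p] E a' + θ) x → (p : ℤ_[p]) ^ i ∣ (a - a')) ∧
      (∀ b a : ℤ_[p], (p : ℤ_[p]) ∣ a →
        InCoset p E i (1 + algebraMap ℤ_[p] E b * θ) x →
        ¬ InCoset p E i (algebraMap ℤ_[p] E a + θ) x)) := by
  have h1b (b : ℤ_[p]) : 1 + algebraMap ℤ_[p] E b * θ
      = algebraMap ℤ_[p] E 1 + algebraMap ℤ_[p] E b * θ := by rw [map_one]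
  have ha1 (a : ℤ_[p]) : algebraMap ℤ_[p] E a + θ
      = algebraMap ℤ_[p] E a + algebraMap ℤ_[p] E 1 * θ := by rw [map_one, one_mul]
  have hp1 : ¬ (p : ℤ_[p]) ∣ 1 := PadicInt.prime_p.not_dvd_one
  refine ⟨fun b b' h x => ?_, fun a a' _ _ h x => ?_, fun x hx =>
    ⟨hθ.exists_inCoset hE.1 hx, fun b b' h h' => ?_, fun a a' _ _ h h' => ?_,
      fun b a ha h h' => ?_⟩⟩
  · rw [h1b, h1b]
    exact (inCoset_of_dvd_sub hE hθ (by tauto) (by tauto) (by simp)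
      (dvd_sub_comm.mp h)).inCoset_iff x
  · rw [ha1, ha1]
    exact (inCoset_of_dvd_sub hE hθ (by tauto) (by tauto) (dvd_sub_comm.mp h)
      (by simp)).inCoset_iff x
  · rw [h1b] at h h'
    simpa using hθ.dvd_sub_of_inCoset (h'.trans h.symm)
  · rw [ha1] at h h'
    simpa using hθ.dvd_sub_of_inCoset (h.trans h'.symm)
  · rw [h1b] at h
    rw [ha1] at h'
    have hdet := (dvd_pow_self _ (by omega)).trans (hθ.dvd_sub_of_inCoset (h.trans h'.symm))
    exact hp1 (by simpa using dvd_add hdet (ha.mul_right b))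
end
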